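/- arXiv:1201.2369 — 2 statements merged into one kernel-verified Lean document; each statement's English description precedes it below -/
import Mathlib

section
/- Let G be a finite group acting transitively on a finite set X with |X| > 1, let x ∈ X, and let H be a normal subgroup of the stabilizer G_x. Suppose G is generated by the union of the subgroups H_y over all y ∈ X, where H_y := gHg⁻¹ for any g ∈ G with g·x = y. Then H is not a subnormal subgroup of G. -/
/-- For `y ∈ X`, the set `H_y := gHg⁻¹` for any `g ∈ G` with `g • x = y`
(rendered, choice-freely, as the union of `gHg⁻¹` over all such `g`; when `H` is
normal in the stabilizer of `x` all these conjugates coincide). -/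
def conjAt {G X : Type*} [Group G] [MulAction G X] (H : Subgroup G) (x y : X) : Set G :=
  ⋃ g ∈ {g : G | g • x = y}, (fun h => g * h * g⁻¹) '' (H : Set G)

/-- A subgroup `H` of a group `G` is subnormal in a subgroup `K` (e.g. `K = ⊤`)
if there are `ℓ` and a chain of subgroups `H = F_ℓ ⊆ ⋯ ⊆ F_1 ⊆ F_0 = K` with
`F_i` normal in `F_{i-1}` for all `i = 1, …, ℓ`. -/
def IsSubnormalIn {G : Type*} [Group G] (H K : Subgroup G) : Prop :=
  ∃ (ℓ : ℕ) (F : Fin (ℓ + 1) → Subgroup G),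
    F 0 = K ∧ F (Fin.last ℓ) = H ∧
    ∀ i : Fin ℓ, F i.succ ≤ F i.castSucc ∧
      ∀ g ∈ F i.castSucc, ∀ h ∈ F i.succ, g * h * g⁻¹ ∈ F i.succ

/-- Let G be a finite group acting transitively on a finite set X with
|X| > 1, let x ∈ X, and let H be a normal subgroup of the stabilizer G_x. Suppose G
is generated by the union of the subgroups H_y over all y ∈ X. Then H is not a
subnormal subgroup of G. -/
theorem not_subnormal_of_generating {G X : Type*} [Group G] [Finite G] [Finite X]
    [MulAction G X] [MulAction.IsPretransitive G X] (x : X) (H : Subgroup G)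
    (hX : 1 < Nat.card X)
    (hle : H ≤ MulAction.stabilizer G x)
    (hnorm : ∀ k ∈ MulAction.stabilizer G x, ∀ h ∈ H, k * h * k⁻¹ ∈ H)
    (hgen : Subgroup.closure (⋃ y : X, conjAt H x y) = ⊤) :
    ¬ IsSubnormalIn H ⊤ := by
  rintro ⟨ℓ, F, hF0, hFl, hchain⟩
  -- Key: a subgroup closed under all conjugations and containing H is the whole group.
  have hkey : ∀ N : Subgroup G, (∀ g : G, ∀ h ∈ N, g * h * g⁻¹ ∈ N) → H ≤ N → N = ⊤ := by
    intro N hN hHN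
    rw [eq_top_iff, ← hgen]
    refine (Subgroup.closure_le _).mpr ?_
    intro a ha
    simp only [Set.mem_iUnion, conjAt, Set.mem_image, Set.mem_setOf_eq] at ha
    obtain ⟨y, g, hgx, h, hh, rfl⟩ := ha
    exact hN g h (hHN hh)
  -- By induction on the length of the chain, H = ⊤.
  have main : ∀ n : ℕ, ∀ F : Fin (n + 1) → Subgroup G, F 0 = ⊤ → F (Fin.last n) = H →
      (∀ i : Fin n, F i.succ ≤ F i.castSucc ∧
        ∀ g ∈ F i.castSucc, ∀ h ∈ F i.succ, g * h * g⁻¹ ∈ F i.succ) → H = ⊤ := by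
    intro n
    induction n with
    | zero =>
      intro F h0 hl _
      rw [← hl, ← h0]
      rfl
    | succ n ih =>
      intro F h0 hl hch
      have hdesc : ∀ i : Fin (n + 2), F (Fin.last (n + 1)) ≤ F i := by
        intro i
        induction i using Fin.reverseInduction with
        | last => exact le_refl _
        | cast i ihh => exact le_trans ihh (hch i).1
      have hHF1 : H ≤ F ((0 : Fin (n + 1)).succ) := hl ▸ hdesc _
      have hF1top : F ((0 : Fin (n + 1)).succ) = ⊤ := by
        refine hkey _ ?_ hHF1
        intro g h hh
        have := (hch 0).2 g ?_ h hh
        · exact this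
        · have : (0 : Fin (n + 1)).castSucc = (0 : Fin (n + 2)) := rfl
          rw [this, h0]
          exact Subgroup.mem_top g
      refine ih (fun i => F i.succ) hF1top ?_ ?_
      · show F (Fin.last n).succ = H; rw [Fin.succ_last, hl]
      · intro i
        constructor
        · have := (hch i.succ).1
          rwa [← Fin.succ_castSucc] at this
        · intro g hg h hh
          have := (hch i.succ).2 g ?_ h ?_
          · exact this
          · rwa [← Fin.succ_castSucc]
          · exact hh
  have hHtop : H = ⊤ := main ℓ F hF0 hFl hchain
  -- Contradiction with |X| > 1.
  have : Nontrivial X := Finite.one_lt_card_iff_nontrivial.mp hX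
  obtain ⟨y, hy⟩ := exists_ne x
  obtain ⟨g, hg⟩ := MulAction.exists_smul_eq G x y
  have hgH : g ∈ H := hHtop ▸ Subgroup.mem_top g
  have : g • x = x := hle hgH
  exact hy (hg ▸ this)
end

section
/- Let G be a finite group acting transitively on a finite set X, let x ∈ X, and let H be a normal subgroup of the stabilizer G_x; for y ∈ X set H_y := gHg⁻¹ for any g ∈ G with g·x = y. If for every y ∈ X the subgroup H is subnormal in the subgroup of G generated by H ∪ H_y, then H is subnormal in G. -/
open scoped Pointwise

namespace Subgroup

variable {G G' : Type*} [Group G] [Group G'] {A B H N T : Subgroup G}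

theorem le_normalizer_of_conj_smul_le (h : ∀ a ∈ A, MulAut.conj a • H ≤ H) :
    A ≤ normalizer (H : Set G) := by
  intro a ha
  rw [mem_normalizer_iff]
  refine fun x => ⟨fun hx => h a ha (smul_mem_pointwise_smul x _ H hx), fun hx => ?_⟩
  simpa [mul_assoc] using h a⁻¹ (inv_mem ha) (smul_mem_pointwise_smul _ (MulAut.conj a⁻¹) H hx)

def NormalIn (A B : Subgroup G) : Prop := A ≤ B ∧ B ≤ normalizer (A : Set G)

theorem normalIn_iff_conj_mem :
    NormalIn A B ↔ A ≤ B ∧ ∀ g ∈ B, ∀ h ∈ A, g * h * g⁻¹ ∈ A := by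
  refine and_congr_right fun _ => ⟨fun hB g hg h hh => (mem_normalizer_iff.1 (hB hg) h).1 hh,
    fun hB => le_normalizer_of_conj_smul_le ?_⟩
  rintro g hg - ⟨h, hh, rfl⟩
  exact hB g hg h hh

theorem normalIn_top_iff : NormalIn A ⊤ ↔ A.Normal := by
  simp [NormalIn, top_le_iff, normalizer_eq_top_iff]

theorem NormalIn.map (f : G →* G') (h : NormalIn A B) : NormalIn (A.map f) (B.map f) :=
  ⟨map_mono h.1, (map_mono h.2).trans (le_normalizer_map f)⟩

theorem NormalIn.comap {A B : Subgroup G'} (f : G →* G') (h : NormalIn A B) :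
    NormalIn (A.comap f) (B.comap f) :=
  ⟨comap_mono h.1, (comap_mono h.2).trans (le_normalizer_comap f)⟩

theorem NormalIn.conj_smul (g : G) (h : NormalIn A B) :
    NormalIn (MulAut.conj g • A) (MulAut.conj g • B) :=
  h.map _

theorem NormalIn.inf_right (h : NormalIn A B) (K : Subgroup G) : NormalIn (A ⊓ K) (B ⊓ K) :=
  ⟨inf_le_inf_right K h.1,
    (inf_le_inf h.2 le_normalizer).trans inf_normalizer_le_normalizer_inf⟩

theorem NormalIn.inf (hA : NormalIn A T) (hB : NormalIn B T) : NormalIn (A ⊓ B) T :=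
  ⟨inf_le_left.trans hA.1, le_inf hA.2 hB.2 |>.trans inf_normalizer_le_normalizer_inf⟩

theorem le_centralizer_of_disjoint (hNA : N ≤ normalizer (A : Set G))
    (hAN : A ≤ normalizer (N : Set G)) (h : Disjoint N A) : N ≤ centralizer (A : Set G) := by
  intro n hn
  rw [mem_centralizer_iff]
  intro a ha
  have hcomm : a * n * a⁻¹ * n⁻¹ ∈ N ⊓ A := mem_inf.2
    ⟨mul_mem ((mem_normalizer_iff.1 (hAN ha) n).1 hn) (inv_mem hn),
      by simpa [mul_assoc] using mul_mem ha ((mem_normalizer_iff.1 (hNA hn) a⁻¹).1 (inv_mem ha))⟩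
  rwa [h.eq_bot, mem_bot, mul_inv_eq_one, mul_inv_eq_iff_eq_mul] at hcomm

def normalClosureIn (A H : Subgroup G) : Subgroup G :=
  ⨆ a ∈ A, MulAut.conj a • H

theorem conj_smul_le_normalClosureIn {a : G} (ha : a ∈ A) :
    MulAut.conj a • H ≤ normalClosureIn A H :=
  le_iSup₂ (f := fun a (_ : a ∈ A) => MulAut.conj a • H) a ha

theorem le_normalClosureIn : H ≤ normalClosureIn A H := by
  simpa using conj_smul_le_normalClosureIn (H := H) (one_mem A)

theorem normalClosureIn_le_of_le_normalizer (hHB : H ≤ B) (hAB : A ≤ normalizer (B : Set G)) :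
    normalClosureIn A H ≤ B :=
  iSup₂_le fun _ ha => (smul_mono_right _ hHB).trans
    (mem_normalizer_iff_map_conj_eq.1 (hAB ha)).le

theorem normalClosureIn_le_self (hHA : H ≤ A) : normalClosureIn A H ≤ A :=
  normalClosureIn_le_of_le_normalizer hHA le_normalizer

theorem le_normalizer_normalClosureIn : A ≤ normalizer (normalClosureIn A H : Set G) := by
  refine le_normalizer_of_conj_smul_le fun a ha => ?_
  rw [pointwise_smul_subset_iff]
  refine iSup₂_le fun b hb => ?_
  rw [← pointwise_smul_subset_iff, smul_smul, ← map_mul]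
  exact conj_smul_le_normalClosureIn (mul_mem ha hb)

def IsMinimalNormalIn (N T : Subgroup G) : Prop :=
  Minimal (fun K => NormalIn K T ∧ K ≠ ⊥) N

theorem IsMinimalNormalIn.conj_smul (hN : IsMinimalNormalIn N T) {g : G}
    (hg : g ∈ normalizer (T : Set G)) : IsMinimalNormalIn (MulAut.conj g • N) T := by
  have hconj : ∀ {x : G}, x ∈ normalizer (T : Set G) → ∀ {K : Subgroup G},
      NormalIn K T ∧ K ≠ ⊥ → NormalIn (MulAut.conj x • K) T ∧ MulAut.conj x • K ≠ ⊥ := by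
    intro x hx K ⟨hKT, hK⟩
    refine ⟨mem_normalizer_iff_map_conj_eq.1 hx ▸ hKT.conj_smul x, ?_⟩
    rwa [Ne, ← smul_bot (MulAut.conj x), smul_left_cancel_iff]
  refine ⟨hconj hg hN.1, fun K hK hKN => ?_⟩
  rw [subset_pointwise_smul_iff, ← map_inv] at hKN
  rw [pointwise_smul_subset_iff, ← map_inv]
  exact hN.2 (hconj (inv_mem hg) hK) hKN

end Subgroup

open Subgroup

section

variable {G : Type*} [Group G]

theorem isSubnormalIn_iff_reflTransGen {H K : Subgroup G} :
    IsSubnormalIn H K ↔ Relation.ReflTransGen NormalIn H K := by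
  simp only [IsSubnormalIn, ← normalIn_iff_conj_mem]
  rw [← Relation.reflTransGen_swap]
  constructor
  · rintro ⟨ℓ, F, rfl, rfl, hF⟩
    have := List.relationReflTransGen_of_exists_isChain (r := Function.swap NormalIn) (List.ofFn F)
      (List.isChain_ofFn.2 fun i hi => hF ⟨i, by omega⟩) (by simp)
    rwa [List.head_ofFn, List.getLast_ofFn] at this
  · intro h
    obtain ⟨l, hl, hchain, rfl, rfl⟩ := List.exists_isChain_ne_nil_of_relationReflTransGen h
    obtain ⟨ℓ, hℓ⟩ : ∃ ℓ, l.length = ℓ + 1 := Nat.exists_eq_add_one.2 (List.length_pos_iff.2 hl)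
    refine ⟨ℓ, fun i => l[i.val], ?_, ?_, fun i => List.isChain_iff_getElem.1 hchain i (by omega)⟩
    · simp [List.head_eq_getElem]
    · simp [List.getLast_eq_getElem, hℓ]

namespace IsSubnormalIn

variable {G' : Type*} [Group G'] {A B C : Subgroup G}

theorem refl (A : Subgroup G) : IsSubnormalIn A A :=
  isSubnormalIn_iff_reflTransGen.2 .refl

theorem of_normalIn (h : NormalIn A B) : IsSubnormalIn A B :=
  isSubnormalIn_iff_reflTransGen.2 (.single h)

theorem of_normal (h : A.Normal) : IsSubnormalIn A ⊤ :=
  of_normalIn (normalIn_top_iff.2 h)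

theorem trans (hAB : IsSubnormalIn A B) (hBC : IsSubnormalIn B C) : IsSubnormalIn A C := by
  rw [isSubnormalIn_iff_reflTransGen] at *
  exact hAB.trans hBC

@[elab_as_elim]
theorem induction {motive : ∀ B, IsSubnormalIn A B → Prop} (refl : motive A (refl A))
    (tail : ∀ {B C} (hAB : IsSubnormalIn A B) (hBC : NormalIn B C), motive B hAB →
      motive C (hAB.trans (of_normalIn hBC)))
    (h : IsSubnormalIn A B) : motive B h := by
  have h' := isSubnormalIn_iff_reflTransGen.1 h
  induction h' with
  | refl => exact refl
  | tail hAB hBC ih => exact tail _ hBC (ih (isSubnormalIn_iff_reflTransGen.2 hAB))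

theorem le (h : IsSubnormalIn A B) : A ≤ B := by
  induction h using IsSubnormalIn.induction with
  | refl => exact le_rfl
  | tail _ hBC ih => exact ih.trans hBC.1

theorem lift {F : Subgroup G → Subgroup G'} (hF : ∀ {A B}, NormalIn A B → NormalIn (F A) (F B))
    (h : IsSubnormalIn A B) : IsSubnormalIn (F A) (F B) := by
  induction h using IsSubnormalIn.induction with
  | refl => exact refl _
  | tail _ hBC ih => exact ih.trans (of_normalIn (hF hBC))

theorem map (f : G →* G') (h : IsSubnormalIn A B) : IsSubnormalIn (A.map f) (B.map f) :=
  h.lift (NormalIn.map f)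

theorem comap {A B : Subgroup G'} (f : G →* G') (h : IsSubnormalIn A B) :
    IsSubnormalIn (A.comap f) (B.comap f) :=
  h.lift (NormalIn.comap f)

theorem conj_smul (g : G) (h : IsSubnormalIn A B) :
    IsSubnormalIn (MulAut.conj g • A) (MulAut.conj g • B) :=
  h.map _

theorem restrict {K : Subgroup G} (h : IsSubnormalIn A B) (hAK : A ≤ K) (hKB : K ≤ B) :
    IsSubnormalIn A K := by
  simpa [inf_eq_left.2 hAK, inf_eq_right.2 hKB] using h.lift (F := (· ⊓ K)) (·.inf_right K)

theorem subgroupOf_top_iff {K : Subgroup G} (hAK : A ≤ K) :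
    IsSubnormalIn (A.subgroupOf K) ⊤ ↔ IsSubnormalIn A K := by
  refine ⟨fun h => ?_, fun h => ?_⟩
  · simpa [subgroupOf_map_subtype, hAK, ← MonoidHom.range_eq_map] using h.map K.subtype
  · simpa [subgroupOf_self] using h.comap K.subtype

theorem exists_not_le_normalClosureIn_le {H K M : Subgroup G}
    (h : IsSubnormalIn H K) (hHM : H ≤ M) (hKM : ¬ K ≤ M) :
    ∃ A, H ≤ A ∧ A ≤ K ∧ ¬ A ≤ M ∧ normalClosureIn A H ≤ M := by
  induction h using IsSubnormalIn.induction with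
  | refl => exact absurd hHM hKM
  | @tail B C hHB hBC ih =>
    by_cases hBM : B ≤ M
    · exact ⟨C, hHB.le.trans hBC.1, le_rfl, hKM,
        (normalClosureIn_le_of_le_normalizer hHB.le hBC.2).trans hBM⟩
    · obtain ⟨A, hHA, hAB, hAM, hA⟩ := ih hBM
      exact ⟨A, hHA, hAB.trans hBC.1, hAM, hA⟩

theorem le_normalizer_of_isMinimalNormalIn [Finite G] {H T N : Subgroup G}
    (hH : IsSubnormalIn H T) (hN : IsMinimalNormalIn N T) : N ≤ normalizer (H : Set G) := by
  induction hH using IsSubnormalIn.induction generalizing N with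
  | refl => exact hN.1.1.1.trans le_normalizer
  | @tail A T hHA hAT ih =>
    have hNT := hN.1.1
    by_cases hNA : N ⊓ A = ⊥
    · exact (le_centralizer_of_disjoint (hNT.1.trans hAT.2) (hAT.1.trans hNT.2)
        (disjoint_iff.2 hNA)).trans ((centralizer_le hHA.le).trans (centralizer_le_normalizer _))
    have hNleA : N ≤ A := (hN.2 ⟨hNT.inf hAT, hNA⟩ inf_le_left).trans inf_le_right
    obtain ⟨N₀, hN₀N, hN₀⟩ := exists_minimal_le_of_wellFoundedLT
      (fun K => NormalIn K A ∧ K ≠ ⊥) N ⟨⟨hNleA, hAT.1.trans hNT.2⟩, hN.1.2⟩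
    -- the `T`-conjugates of a minimal normal subgroup `N₀` of `A` inside `N` generate `N`
    have hcl : normalClosureIn T N₀ = N := by
      have hle : normalClosureIn T N₀ ≤ N := normalClosureIn_le_of_le_normalizer hN₀N hNT.2
      refine le_antisymm hle (hN.2 ⟨⟨hle.trans hNT.1, le_normalizer_normalClosureIn⟩,
        ne_bot_of_le_ne_bot hN₀.1.2 le_normalClosureIn⟩ hle)
    rw [← hcl]
    exact iSup₂_le fun t ht => ih (IsMinimalNormalIn.conj_smul hN₀ (hAT.2 ht))

theorem sup_top [Finite G] {A B : Subgroup G} (hA : IsSubnormalIn A ⊤) (hB : IsSubnormalIn B ⊤) :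
    IsSubnormalIn (A ⊔ B) ⊤ := by
  induction hn : Nat.card G using Nat.strong_induction_on generalizing G with
  | _ n ih =>
  rcases subsingleton_or_nontrivial G with hG | hG
  · rw [Subsingleton.elim (A ⊔ B) ⊤]
    exact refl ⊤
  obtain ⟨N, -, hN⟩ := exists_minimal_le_of_wellFoundedLT (fun K => NormalIn K ⊤ ∧ K ≠ ⊥) ⊤
    ⟨normalIn_top_iff.2 (normal_top (G := G)), top_ne_bot⟩
  have : N.Normal := normalIn_top_iff.1 hN.1.1
  have hNAB : N ≤ normalizer ((A ⊔ B : Subgroup G) : Set G) :=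
    (le_inf (hA.le_normalizer_of_isMinimalNormalIn hN)
      (hB.le_normalizer_of_isMinimalNormalIn hN)).trans
      (normalizer_inf_normalizer_le_normalizer_sup A B)
  have hcard : Nat.card (G ⧸ N) < n := by
    rw [← hn, card_eq_card_quotient_mul_card_subgroup N]
    exact lt_mul_of_one_lt_right Nat.card_pos ((one_lt_card_iff_ne_bot N).2 hN.1.2)
  have hmap : ∀ {C : Subgroup G}, IsSubnormalIn C ⊤ →
      IsSubnormalIn (C.map (QuotientGroup.mk' N)) ⊤ := fun hC => by
    simpa [map_top_of_surjective _ (QuotientGroup.mk'_surjective N)] using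
      hC.map (QuotientGroup.mk' N)
  have hQ := ih _ hcard (hmap hA) (hmap hB) rfl
  rw [← Subgroup.map_sup] at hQ
  have hABN : IsSubnormalIn (A ⊔ B ⊔ N) ⊤ := by
    simpa [comap_map_eq] using hQ.comap (QuotientGroup.mk' N)
  exact (of_normalIn ⟨le_sup_left, sup_le le_normalizer hNAB⟩).trans hABN

theorem sup [Finite G] {A B T : Subgroup G} (hA : IsSubnormalIn A T) (hB : IsSubnormalIn B T) :
    IsSubnormalIn (A ⊔ B) T := by
  rw [← subgroupOf_top_iff (sup_le hA.le hB.le), subgroupOf_sup hA.le hB.le]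
  exact ((subgroupOf_top_iff hA.le).2 hA).sup_top ((subgroupOf_top_iff hB.le).2 hB)

theorem iSup [Finite G] {ι : Sort*} {f : ι → Subgroup G} {T : Subgroup G}
    (h : ∀ i, IsSubnormalIn (f i) T) : IsSubnormalIn (⨆ i, f i) T := by
  suffices ∀ S : Set (Subgroup G), (∀ A ∈ S, IsSubnormalIn A T) → IsSubnormalIn (sSup S) T by
    rw [← sSup_range]
    exact this _ (Set.forall_mem_range.2 h)
  intro S hS
  induction S, S.toFinite using Set.Finite.induction_on with
  | empty => simpa using of_normalIn ⟨bot_le, le_top.trans (normalizer_eq_top_iff.2 normal_bot).ge⟩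
  | @insert A S _ _ ih =>
    rw [sSup_insert]
    exact (hS A (.inl rfl)).sup (ih fun B hB => hS B (.inr hB))

end IsSubnormalIn

theorem isSubnormalIn_normalClosureIn [Finite G] {A H L : Subgroup G}
    (hH : ∀ K, K ≠ ⊤ → H ≤ K → IsSubnormalIn H K) (hL : L ≠ ⊤) (hAL : normalClosureIn A H ≤ L) :
    IsSubnormalIn (normalClosureIn A H) L := by
  refine IsSubnormalIn.iSup fun a => IsSubnormalIn.iSup fun ha => ?_
  have hHL := (conj_smul_le_normalClosureIn ha).trans hAL
  rw [pointwise_smul_subset_iff, ← map_inv] at hHL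
  have hL' : MulAut.conj a • MulAut.conj a⁻¹ • L = L := by
    rw [smul_smul, ← map_mul, mul_inv_cancel, map_one, one_smul]
  have hne : MulAut.conj a⁻¹ • L ≠ ⊤ := fun h => hL (by rw [← hL', h, Normal.conj_smul_eq_self])
  simpa only [hL'] using (hH _ hne hHL).conj_smul a

/-- Wielandt's zipper lemma. -/
theorem eq_of_isCoatom_of_not_isSubnormalIn [Finite G] {H : Subgroup G}
    (hH : ∀ K, K ≠ ⊤ → H ≤ K → IsSubnormalIn H K) (hHG : ¬ IsSubnormalIn H ⊤)
    {M₁ M₂ : Subgroup G} (hM₁ : IsCoatom M₁) (hM₂ : IsCoatom M₂)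
    (hHM₁ : H ≤ M₁) (hHM₂ : H ≤ M₂) : M₁ = M₂ := by
  induction H using WellFoundedGT.induction generalizing M₁ M₂ with
  | _ H ih =>
  have hN : normalizer (H : Set G) ≠ ⊤ := fun h => hHG (.of_normal (normalizer_eq_top_iff.1 h))
  obtain ⟨M, hM, hNM⟩ := (eq_top_or_exists_le_coatom _).resolve_left hN
  suffices ∀ K, IsCoatom K → H ≤ K → K = M from
    (this M₁ hM₁ hHM₁).trans (this M₂ hM₂ hHM₂).symm
  intro K hK hHK
  by_contra hKM
  have hHK' := hH K hK.1 hHK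
  -- `D := normalClosureIn A H` is a larger counterexample below `M` whose normalizer escapes `M`
  obtain ⟨A, hHA, hAK, hAM, hDM⟩ := hHK'.exists_not_le_normalClosureIn_le
    (le_normalizer.trans hNM) (fun h => hKM ((hK.le_iff_eq hM.1).1 h).symm)
  have hHD : H ≤ normalClosureIn A H := le_normalClosureIn
  have hAD : A ≤ normalizer (normalClosureIn A H : Set G) := le_normalizer_normalClosureIn
  have hHltD : H < normalClosureIn A H :=
    hHD.lt_of_ne fun h => hAM (hAD.trans (h ▸ hNM))
  have hDG : ¬ IsSubnormalIn (normalClosureIn A H) ⊤ := fun h =>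
    hHG ((hHK'.restrict hHD ((normalClosureIn_le_self hHA).trans hAK)).trans h)
  have hND : normalizer (normalClosureIn A H : Set G) ≠ ⊤ := fun h =>
    hDG (.of_normal (normalizer_eq_top_iff.1 h))
  obtain ⟨M', hM', hNM'⟩ := (eq_top_or_exists_le_coatom _).resolve_left hND
  have hMM' : M = M' := ih _ hHltD (fun L hL hDL => isSubnormalIn_normalClosureIn hH hL hDL) hDG
    hM hM' hDM (le_normalizer.trans hNM')
  exact hAM (hAD.trans (hMM' ▸ hNM'))

theorem isSubnormalIn_top_of_forall_sup_conj_smul [Finite G] {H : Subgroup G}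
    (h : ∀ g : G, IsSubnormalIn H (H ⊔ MulAut.conj g • H)) : IsSubnormalIn H ⊤ := by
  induction hn : Nat.card G using Nat.strong_induction_on generalizing G with
  | _ n ih =>
  have hproper : ∀ K, K ≠ ⊤ → H ≤ K → IsSubnormalIn H K := by
    intro K hK hHK
    rw [← IsSubnormalIn.subgroupOf_top_iff hHK]
    refine ih _ (hn ▸ (card_le_card_group K).lt_of_ne (mt (card_eq_iff_eq_top K).1 hK))
      (fun k => ?_) rfl
    rw [conj_smul_subgroupOf hHK, ← subgroupOf_sup hHK (conj_smul_le_of_le hHK k)]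
    exact (h k).comap K.subtype
  by_contra hHG
  obtain ⟨M, hM, hHM⟩ := (eq_top_or_exists_le_coatom H).resolve_left
    fun hH => hHG (by rw [hH]; exact .refl ⊤)
  have hconj : ∀ g : G, MulAut.conj g • H ≤ M := by
    intro g
    obtain ⟨Mg, hMg, hle⟩ := (eq_top_or_exists_le_coatom (H ⊔ MulAut.conj g • H)).resolve_left
      fun htop => hHG (htop ▸ h g)
    exact eq_of_isCoatom_of_not_isSubnormalIn hproper hHG hMg hM (le_sup_left.trans hle) hHM ▸
      le_sup_right.trans hle
  have hE : normalClosureIn ⊤ H ≤ M := iSup₂_le fun g _ => hconj g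
  have hEn : (normalClosureIn ⊤ H).Normal :=
    normalizer_eq_top_iff.1 (top_le_iff.1 le_normalizer_normalClosureIn)
  exact hHG ((hproper _ (ne_top_of_le_ne_top hM.1 hE) le_normalClosureIn).trans (.of_normal hEn))

theorem conj_smul_subset_conjAt {X : Type*} [MulAction G X] (H : Subgroup G) (x : X) (g : G) :
    ((MulAut.conj g • H : Subgroup G) : Set G) ⊆ conjAt H x (g • x) := by
  rintro - ⟨h, hh, rfl⟩
  exact Set.mem_biUnion (x := g) rfl ⟨h, hh, rfl⟩

end

theorem subnormal_of_pairwise_subnormal_general {G X : Type*} [Group G] [Finite G]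
    [MulAction G X] (x : X) (H : Subgroup G)
    (hyp : ∀ y : X, IsSubnormalIn H (Subgroup.closure ((H : Set G) ∪ conjAt H x y))) :
    IsSubnormalIn H ⊤ := by
  refine isSubnormalIn_top_of_forall_sup_conj_smul fun g => (hyp (g • x)).restrict le_sup_left ?_
  rw [Subgroup.closure_union, closure_eq]
  exact sup_le_sup_left (fun z hz => subset_closure (conj_smul_subset_conjAt H x g hz)) _

/-- Let G be a finite group acting transitively on a finite set X,
x ∈ X, and H a normal subgroup of the stabilizer G_x. If for every y ∈ X the
subgroup H is subnormal in the subgroup of G generated by H ∪ H_y, then H is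
subnormal in G. -/
theorem subnormal_of_pairwise_subnormal {G X : Type*} [Group G] [Finite G] [Finite X]
    [MulAction G X] [MulAction.IsPretransitive G X] (x : X) (H : Subgroup G)
    (hle : H ≤ MulAction.stabilizer G x)
    (hnorm : ∀ k ∈ MulAction.stabilizer G x, ∀ h ∈ H, k * h * k⁻¹ ∈ H)
    (hyp : ∀ y : X, IsSubnormalIn H (Subgroup.closure ((H : Set G) ∪ conjAt H x y))) :
    IsSubnormalIn H ⊤ :=
  subnormal_of_pairwise_subnormal_general x H hyp
end
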